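/- arXiv:2403.19134 — 2 statements merged into one kernel-verified Lean document; each statement's English description precedes it below -/
import Mathlib

section
/- Assume k ≥ 1 > h, d₁ = d₂ = d, γ = 1 and J₁ = J₂ = J. Let (u,v,g,h) be a solution of system (1.2). If t₀ > 0 and α₀ > 0 are such that u(t₀,x) ≤ α₀ v(t₀,x) for all x ∈ ℝ, then u(t,x) ≤ α₀ v(t,x) for all t ≥ t₀ and all x ∈ ℝ. -/
open MeasureTheory Filter Topology

/-- Assumption (J) on a kernel function: continuous, bounded, even, nonnegative,
positive at 0, total integral 1. -/
def IsKernel (J : ℝ → ℝ) : Prop :=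
  Continuous J ∧ (∃ C, ∀ x, J x ≤ C) ∧ (∀ x, J (-x) = J x) ∧
    (∀ x, 0 ≤ J x) ∧ 0 < J 0 ∧ (∫ x, J x) = 1

/-- Admissible initial data for system (1.2). -/
def AdmissibleInit (h₀ : ℝ) (u₀ v₀ : ℝ → ℝ) : Prop :=
  0 < h₀ ∧ Continuous u₀ ∧ (∀ x : ℝ, h₀ ≤ |x| → u₀ x = 0) ∧
    (∀ x : ℝ, |x| < h₀ → 0 < u₀ x) ∧
    Continuous v₀ ∧ (∃ C, ∀ x, v₀ x ≤ C) ∧ (∀ x, 0 ≤ v₀ x) ∧ (∃ x, v₀ x ≠ 0)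

/-- A solution `(u, v, g, h)` of the free boundary system (1.2), with parameters
`d₁, d₂, hc, k, γ, μ`, kernels `J₁, J₂` and initial data `(u₀, v₀, h₀)`.
(The interspecific competition constant called `h` in the paper is named `hc` here,
since `h` denotes the right free boundary.) -/
structure IsSolution (d₁ d₂ hc k γ μ h₀ : ℝ) (J₁ J₂ u₀ v₀ : ℝ → ℝ)
    (u v : ℝ → ℝ → ℝ) (g h : ℝ → ℝ) : Prop where
  u_nonneg : ∀ t x, 0 ≤ u t x
  v_nonneg : ∀ t x, 0 ≤ v t x
  u_bdd : ∃ C, ∀ t x, u t x ≤ C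
  v_bdd : ∃ C, ∀ t x, v t x ≤ C
  u_cont : Continuous fun p : ℝ × ℝ => u p.1 p.2
  v_cont : Continuous fun p : ℝ × ℝ => v p.1 p.2
  g_cont : Continuous g
  h_cont : Continuous h
  g_anti : AntitoneOn g (Set.Ici 0)
  h_mono : MonotoneOn h (Set.Ici 0)
  gh_lt : ∀ t ≥ 0, g t < h t
  u_eq : ∀ t > 0, ∀ x, g t < x → x < h t →
    HasDerivAt (fun s => u s x)
      (d₁ * ((∫ y in g t..h t, J₁ (x - y) * u t y) - u t x)
        + u t x * (1 - u t x - k * v t x)) t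
  v_eq : ∀ t > 0, ∀ x : ℝ,
    HasDerivAt (fun s => v s x)
      (d₂ * ((∫ y, J₂ (x - y) * v t y) - v t x)
        + γ * v t x * (1 - v t x - hc * u t x)) t
  u_outside : ∀ t ≥ 0, ∀ x : ℝ, x ∉ Set.Ioo (g t) (h t) → u t x = 0
  h_eq : ∀ t > 0,
    HasDerivAt h (μ * ∫ x in g t..h t, (∫ y in Set.Ioi (h t), J₁ (x - y)) * u t x) t
  g_eq : ∀ t > 0,
    HasDerivAt g (-μ * ∫ x in g t..h t, (∫ y in Set.Iio (g t), J₁ (x - y)) * u t x) t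
  h_init : h 0 = h₀
  g_init : g 0 = -h₀
  u_init : ∀ x, u 0 x = u₀ x
  v_init : ∀ x, v 0 x = v₀ x

/-! The gap `w = α₀ v - u` obeys `w_t ≥ d (J * w - w) + w` wherever it is negative: there `u > 0`,
so both equations hold, and `k ≥ 1 > hc` makes the reaction terms at least `w`. For
`z = e^{-2(t - t₀)} w` this becomes `z_t ≥ d (J * z - z) - z`. If `z` went negative, take its
infimum `m < 0` over a time strip, a point where `z < m + ε`, and the first time `τ` at which
`z(·, y)` comes down to `m + ε`: there `z_t ≤ 0`, while the inequality gives
`z_t ≥ -dε - (m + ε) > 0` for small `ε`. -/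

open Set

namespace IsKernel

variable {J : ℝ → ℝ}

lemma nonneg (hJ : IsKernel J) (x : ℝ) : 0 ≤ J x := hJ.2.2.2.1 x

lemma integral_eq_one (hJ : IsKernel J) : ∫ x, J x = 1 := hJ.2.2.2.2.2

lemma integrable (hJ : IsKernel J) : Integrable J := by
  by_contra hJi
  have h1 := hJ.integral_eq_one
  rw [integral_undef hJi] at h1
  exact zero_ne_one h1

lemma integral_comp_sub_left (hJ : IsKernel J) (x : ℝ) : ∫ y, J (x - y) = 1 := by
  rw [integral_sub_left_eq_self J volume x, hJ.integral_eq_one]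

lemma integrable_mul (hJ : IsKernel J) (x : ℝ) {f : ℝ → ℝ} {C : ℝ}
    (hf : AEStronglyMeasurable f) (hC : ∀ y, ‖f y‖ ≤ C) :
    Integrable fun y => J (x - y) * f y := by
  simpa only [mul_comm] using
    (hJ.integrable.comp_sub_left x).bdd_mul hf (Eventually.of_forall hC)

lemma le_integral_mul (hJ : IsKernel J) {x m : ℝ} {f : ℝ → ℝ}
    (hf : Integrable fun y => J (x - y) * f y) (hm : ∀ y, m ≤ f y) :
    m ≤ ∫ y, J (x - y) * f y :=
  calc m = ∫ y, J (x - y) * m := by rw [integral_mul_const, hJ.integral_comp_sub_left, one_mul]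
    _ ≤ ∫ y, J (x - y) * f y :=
      integral_mono ((hJ.integrable.comp_sub_left x).mul_const m) hf fun y =>
        mul_le_mul_of_nonneg_left (hm y) (hJ.nonneg _)

end IsKernel

lemma exists_first_le_of_continuousOn {φ : ℝ → ℝ} {a b L : ℝ} (hab : a ≤ b)
    (hφ : ContinuousOn φ (Icc a b)) (ha : L < φ a) (hb : φ b ≤ L) :
    ∃ τ ∈ Ioc a b, φ τ ≤ L ∧ ∀ t ∈ Ico a τ, L < φ t := by
  set K := Icc a b ∩ φ ⁻¹' Iic L
  have hK : IsClosed K := hφ.preimage_isClosed_of_isClosed isClosed_Icc isClosed_Iic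
  have hKbdd : BddBelow K := ⟨a, fun t ht => ht.1.1⟩
  have hτ : sInf K ∈ K := hK.csInf_mem ⟨b, ⟨hab, le_rfl⟩, hb⟩ hKbdd
  have hbefore : ∀ t ∈ Ico a (sInf K), L < φ t := fun t ht =>
    not_le.1 fun htL =>
      (csInf_le hKbdd ⟨⟨ht.1, ht.2.le.trans hτ.1.2⟩, htL⟩).not_gt ht.2
  refine ⟨sInf K, ⟨lt_of_le_of_ne hτ.1.1 fun h => ?_, hτ.1.2⟩, hτ.2, hbefore⟩
  have hτL : φ (sInf K) ≤ L := hτ.2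
  rw [← h] at hτL
  exact hτL.not_gt ha

lemma HasDerivAt.nonpos_of_forall_Ioo_le {φ : ℝ → ℝ} {φ' a τ : ℝ} (hφ : HasDerivAt φ φ' τ)
    (ha : a < τ) (hmin : ∀ t ∈ Ioo a τ, φ τ ≤ φ t) : φ' ≤ 0 := by
  have hslope := (hasDerivAt_iff_tendsto_slope.1 hφ).mono_left
    (nhdsWithin_mono τ (show Iio τ ⊆ {τ}ᶜ from fun t ht => ht.ne))
  refine le_of_tendsto hslope ?_
  filter_upwards [Ioo_mem_nhdsLT ha] with t ht
  rw [slope_def_field]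
  exact div_nonpos_of_nonneg_of_nonpos (sub_nonneg.2 (hmin t ht)) (sub_nonpos.2 ht.2.le)

section NonlocalMinimumPrinciple

variable {J : ℝ → ℝ} {d t₀ T : ℝ}

theorem nonneg_of_damped_nonlocal_supersolution (hJ : IsKernel J) (hd : 0 ≤ d)
    {z : ℝ → ℝ → ℝ} (hcont : ∀ x, ContinuousOn (fun t => z t x) (Icc t₀ T))
    (hbdd : BddBelow (image2 z (Icc t₀ T) univ))
    (hint : ∀ t ∈ Ioc t₀ T, ∀ x, Integrable fun y => J (x - y) * z t y)
    (hinit : ∀ x, 0 ≤ z t₀ x)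
    (hderiv : ∀ t ∈ Ioc t₀ T, ∀ x, z t x < 0 → ∃ z', HasDerivAt (fun s => z s x) z' t ∧
      d * ((∫ y, J (x - y) * z t y) - z t x) - z t x ≤ z') :
    ∀ t ∈ Icc t₀ T, ∀ x, 0 ≤ z t x := by
  by_contra! hneg
  obtain ⟨t₁, ht₁, x₁, hz₁⟩ := hneg
  set m := sInf (image2 z (Icc t₀ T) univ)
  have hm_le : ∀ t ∈ Icc t₀ T, ∀ x, m ≤ z t x := fun t ht x =>
    csInf_le hbdd (mem_image2_of_mem ht (mem_univ x))
  have hm : m < 0 := (hm_le t₁ ht₁ x₁).trans_lt hz₁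
  set ε := -m / (2 * (d + 1))
  have hε : 0 < ε := div_pos (by linarith) (by linarith)
  have hdε : (d + 1) * ε = -m / 2 := by
    simp only [ε]
    field_simp
  have hmε : m + ε < 0 := by nlinarith [mul_nonneg hd hε.le]
  obtain ⟨_, ⟨s, hs, y, -, rfl⟩, hzs⟩ :=
    exists_lt_of_csInf_lt ⟨_, mem_image2_of_mem ht₁ (mem_univ x₁)⟩ (lt_add_of_pos_right m hε)
  obtain ⟨τ, hτ, hzτ, hbefore⟩ :=
    exists_first_le_of_continuousOn hs.1 ((hcont y).mono (Icc_subset_Icc_right hs.2))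
      (show m + ε < z t₀ y by linarith [hinit y]) hzs.le
  have hτT : τ ∈ Ioc t₀ T := ⟨hτ.1, hτ.2.trans hs.2⟩
  obtain ⟨z', hz', hz'_ge⟩ := hderiv τ hτT y (by linarith)
  have hz'_nonpos : z' ≤ 0 :=
    hz'.nonpos_of_forall_Ioo_le hτ.1 fun t ht => hzτ.trans (hbefore t ⟨ht.1.le, ht.2⟩).le
  have hI : m ≤ ∫ y', J (y - y') * z τ y' :=
    hJ.le_integral_mul (hint τ hτT y) (hm_le τ (Ioc_subset_Icc_self hτT))
  have hdiff : -(d * ε) ≤ d * ((∫ y', J (y - y') * z τ y') - z τ y) := by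
    rw [← mul_neg]
    exact mul_le_mul_of_nonneg_left (by linarith) hd
  linarith

theorem nonneg_of_nonlocal_supersolution (hJ : IsKernel J) (hd : 0 ≤ d) {c : ℝ} (hc : 0 ≤ c)
    {w : ℝ → ℝ → ℝ} (hcont : ∀ x, ContinuousOn (fun t => w t x) (Icc t₀ T))
    (hbdd : BddBelow (image2 w (Icc t₀ T) univ))
    (hint : ∀ t ∈ Ioc t₀ T, ∀ x, Integrable fun y => J (x - y) * w t y)
    (hinit : ∀ x, 0 ≤ w t₀ x)
    (hderiv : ∀ t ∈ Ioc t₀ T, ∀ x, w t x < 0 → ∃ w', HasDerivAt (fun s => w s x) w' t ∧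
      d * ((∫ y, J (x - y) * w t y) - w t x) + c * w t x ≤ w') :
    ∀ t ∈ Icc t₀ T, ∀ x, 0 ≤ w t x := by
  set E : ℝ → ℝ := fun t => Real.exp (-(c + 1) * (t - t₀))
  have hE_pos : ∀ t, 0 < E t := fun t => Real.exp_pos _
  have hE_le : ∀ t ∈ Icc t₀ T, E t ≤ 1 := fun t ht =>
    Real.exp_le_one_iff.2 (by nlinarith [ht.1])
  have hE' : ∀ t, HasDerivAt E (E t * (-(c + 1))) t := fun t =>
    (((hasDerivAt_id' t).sub_const t₀).const_mul (-(c + 1))).exp.congr_deriv (by rw [mul_one])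
  have hE_cont : Continuous E := by fun_prop
  have hz := nonneg_of_damped_nonlocal_supersolution (z := fun t x => E t * w t x) hJ hd
    (fun x => hE_cont.continuousOn.mul (hcont x)) ?bdd
    (fun t ht x => by simpa only [mul_left_comm] using (hint t ht x).const_mul (E t))
    (fun x => by simpa [E] using hinit x) ?deriv
  · exact fun t ht x => nonneg_of_mul_nonneg_right (hz t ht x) (hE_pos t)
  case bdd =>
    obtain ⟨C, hC⟩ := hbdd
    refine ⟨min C 0, ?_⟩
    rintro _ ⟨t, ht, x, -, rfl⟩
    have hw : C ≤ w t x := hC (mem_image2_of_mem ht (mem_univ x))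
    rcases le_or_gt 0 (w t x) with hw0 | hw0
    · exact (min_le_right _ _).trans (mul_nonneg (hE_pos t).le hw0)
    · nlinarith [min_le_left C 0, mul_nonneg (sub_nonneg.2 (hE_le t ht)) (neg_nonneg.2 hw0.le)]
  case deriv =>
    intro t ht x hzx
    obtain ⟨w', hw', hw'_ge⟩ :=
      hderiv t ht x (neg_of_mul_neg_right hzx (hE_pos t).le)
    refine ⟨_, (hE' t).mul hw', ?_⟩
    have hI : ∫ y, J (x - y) * (E t * w t y) = E t * ∫ y, J (x - y) * w t y := by
      rw [← integral_const_mul]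
      simp only [mul_left_comm]
    rw [hI]
    linarith [mul_le_mul_of_nonneg_left hw'_ge (hE_pos t).le]

end NonlocalMinimumPrinciple

lemma competition_reaction_ge {α k hc u v : ℝ} (hk : 1 ≤ k) (hc0 : 0 ≤ hc) (hc1 : hc ≤ 1)
    (hu : 0 ≤ u) (hv : 0 ≤ v) (hαv : α * v ≤ u) :
    α * v - u ≤ α * (v * (1 - v - hc * u)) - u * (1 - u - k * v) := by
  nlinarith [mul_le_mul_of_nonneg_right hαv hv, mul_le_mul_of_nonneg_left hαv (mul_nonneg hc0 hu),
    mul_nonneg (sub_nonneg.2 hk) (mul_nonneg hu hv), mul_nonneg (sub_nonneg.2 hc1) (mul_nonneg hu hu)]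

namespace IsSolution

variable {d₁ d₂ hc k γ μ h₀ : ℝ} {J₁ J₂ u₀ v₀ : ℝ → ℝ} {u v : ℝ → ℝ → ℝ} {g h : ℝ → ℝ}

lemma integral_interval_eq_integral (hsol : IsSolution d₁ d₂ hc k γ μ h₀ J₁ J₂ u₀ v₀ u v g h)
    {t : ℝ} (ht : 0 ≤ t) (x : ℝ) :
    ∫ y in g t..h t, J₁ (x - y) * u t y = ∫ y, J₁ (x - y) * u t y := by
  rw [intervalIntegral.integral_of_le (hsol.gh_lt t ht).le]
  refine setIntegral_eq_integral_of_forall_compl_eq_zero fun y hy => ?_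
  rw [hsol.u_outside t ht y fun hmem => hy (Ioo_subset_Ioc_self hmem), mul_zero]

lemma integrable_kernel_mul_u (hsol : IsSolution d₁ d₂ hc k γ μ h₀ J₁ J₂ u₀ v₀ u v g h)
    {J : ℝ → ℝ} (hJ : IsKernel J) (t x : ℝ) : Integrable fun y => J (x - y) * u t y := by
  obtain ⟨C, hC⟩ := hsol.u_bdd
  refine hJ.integrable_mul x (C := C) (hsol.u_cont.uncurry_left t).aestronglyMeasurable fun y => ?_
  rw [Real.norm_of_nonneg (hsol.u_nonneg t y)]
  exact hC t y

lemma integrable_kernel_mul_v (hsol : IsSolution d₁ d₂ hc k γ μ h₀ J₁ J₂ u₀ v₀ u v g h)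
    {J : ℝ → ℝ} (hJ : IsKernel J) (t x : ℝ) : Integrable fun y => J (x - y) * v t y := by
  obtain ⟨C, hC⟩ := hsol.v_bdd
  refine hJ.integrable_mul x (C := C) (hsol.v_cont.uncurry_left t).aestronglyMeasurable fun y => ?_
  rw [Real.norm_of_nonneg (hsol.v_nonneg t y)]
  exact hC t y

lemma integrable_kernel_mul_gap (hsol : IsSolution d₁ d₂ hc k γ μ h₀ J₁ J₂ u₀ v₀ u v g h)
    {J : ℝ → ℝ} (hJ : IsKernel J) (α t x : ℝ) :
    Integrable fun y => J (x - y) * (α * v t y - u t y) := by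
  refine (((hsol.integrable_kernel_mul_v hJ t x).const_mul α).sub
    (hsol.integrable_kernel_mul_u hJ t x)).congr (ae_of_all _ fun y => ?_)
  simp only [Pi.sub_apply]
  ring

lemma hasDerivAt_gap_ge {d : ℝ} {J : ℝ → ℝ}
    (hsol : IsSolution d d hc k 1 μ h₀ J J u₀ v₀ u v g h) (hJ : IsKernel J)
    (hk : 1 ≤ k) (hc0 : 0 ≤ hc) (hc1 : hc ≤ 1) {α t x : ℝ} (hα : 0 ≤ α) (ht : 0 < t)
    (hneg : α * v t x - u t x < 0) :
    ∃ w', HasDerivAt (fun s => α * v s x - u s x) w' t ∧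
      d * ((∫ y, J (x - y) * (α * v t y - u t y)) - (α * v t x - u t x))
        + 1 * (α * v t x - u t x) ≤ w' := by
  have hu : 0 < u t x := by nlinarith [mul_nonneg hα (hsol.v_nonneg t x)]
  have hx : x ∈ Ioo (g t) (h t) := by
    by_contra hx
    exact hu.ne' (hsol.u_outside t ht.le x hx)
  have hu' := hsol.u_eq t ht x hx.1 hx.2
  rw [hsol.integral_interval_eq_integral ht.le] at hu'
  refine ⟨_, ((hsol.v_eq t ht x).const_mul α).sub hu', ?_⟩
  have hI : ∫ y, J (x - y) * (α * v t y - u t y)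
      = α * (∫ y, J (x - y) * v t y) - ∫ y, J (x - y) * u t y := by
    simp only [mul_sub, mul_left_comm _ α]
    rw [integral_sub ((hsol.integrable_kernel_mul_v hJ t x).const_mul α)
      (hsol.integrable_kernel_mul_u hJ t x), integral_const_mul]
  rw [hI]
  linarith [competition_reaction_ge hk hc0 hc1 (hsol.u_nonneg t x) (hsol.v_nonneg t x)
    (sub_nonpos.1 hneg.le)]

end IsSolution

theorem ordering_persists_general
    (d hc k μ h₀ : ℝ) (J u₀ v₀ : ℝ → ℝ)
    (u v : ℝ → ℝ → ℝ) (g h : ℝ → ℝ)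
    (hd : 0 < d) (hhc : 0 < hc)
    (hJ : IsKernel J)
    (hsol : IsSolution d d hc k 1 μ h₀ J J u₀ v₀ u v g h)
    (hk : 1 ≤ k) (hhc1 : hc < 1)
    (t₀ α₀ : ℝ) (ht₀ : 0 < t₀) (hα₀ : 0 < α₀)
    (hord : ∀ x : ℝ, u t₀ x ≤ α₀ * v t₀ x) :
    ∀ t ≥ t₀, ∀ x : ℝ, u t x ≤ α₀ * v t x := by
  intro T hT x
  obtain ⟨Cu, hCu⟩ := hsol.u_bdd
  have hgap := nonneg_of_nonlocal_supersolution (w := fun t y => α₀ * v t y - u t y) (T := T)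
    (c := 1) hJ hd.le zero_le_one
    (fun y => (((hsol.v_cont.uncurry_right y).const_mul α₀).sub
      (hsol.u_cont.uncurry_right y)).continuousOn)
    ⟨-Cu, by
      rintro _ ⟨t, -, y, -, rfl⟩
      nlinarith [hCu t y, mul_nonneg hα₀.le (hsol.v_nonneg t y)]⟩
    (fun t _ y => hsol.integrable_kernel_mul_gap hJ α₀ t y)
    (fun y => sub_nonneg.2 (hord y))
    (fun t ht y hy => hsol.hasDerivAt_gap_ge hJ hk hhc.le hhc1.le hα₀.le (ht₀.trans ht.1) hy)
  exact sub_nonneg.1 (hgap T ⟨hT, le_rfl⟩ x)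

/-- Step 1 of the proof of Theorem 1.2. If `k ≥ 1 > hc`, `d₁ = d₂ = d`,
`γ = 1`, `J₁ = J₂ = J`, and at some time `t₀ > 0` we have `u(t₀,·) ≤ α₀ v(t₀,·)` on ℝ
with `α₀ > 0`, then `u(t,·) ≤ α₀ v(t,·)` on ℝ for all `t ≥ t₀`. -/
theorem ordering_persists
    (d hc k μ h₀ : ℝ) (J u₀ v₀ : ℝ → ℝ)
    (u v : ℝ → ℝ → ℝ) (g h : ℝ → ℝ)
    (hd : 0 < d) (hhc : 0 < hc) (hμ : 0 < μ)
    (hJ : IsKernel J)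
    (hinit : AdmissibleInit h₀ u₀ v₀)
    (hsol : IsSolution d d hc k 1 μ h₀ J J u₀ v₀ u v g h)
    (hk : 1 ≤ k) (hhc1 : hc < 1)
    (t₀ α₀ : ℝ) (ht₀ : 0 < t₀) (hα₀ : 0 < α₀)
    (hord : ∀ x : ℝ, u t₀ x ≤ α₀ * v t₀ x) :
    ∀ t ≥ t₀, ∀ x : ℝ, u t x ≤ α₀ * v t x :=
  ordering_persists_general d hc k μ h₀ J u₀ v₀ u v g h hd hhc hJ hsol hk hhc1 t₀ α₀ ht₀ hα₀ hord
end

section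
/- Let (u,v,g,h) be a solution of system (1.2) and suppose J_max := ∫_0^∞ y·J₁(y) dy < ∞. If there exist t₂ ≥ 0, C > 0 and β < 0 such that u(t,x) ≤ C e^{β(t−t₂)} for all t ≥ t₂ and x ∈ [g(t),h(t)], then h(t) ≤ h(t₂) + CμJ_max/|β| for all t ≥ t₂ and g(t) ≥ g(t₂) − CμJ_max/|β| for all t ≥ t₂; in particular h_∞ − g_∞ < ∞. -/
open MeasureTheory Filter Topology

/-!
The outflux through the right front is `μ ∫_g^h T(h - x) u(t,x) dx`, where
`T(w) = ∫_w^∞ J₁` is the tail of the kernel; by evenness of `J₁` the left front has the mirror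
image `μ ∫_g^h T(x - g) u(t,x) dx`. Integration by parts gives
`∫_0^a T = ∫_0^a y J₁(y) dy + a T(a) ≤ J_max`, so under the decay assumption both front speeds
are at most `C μ J_max e^{β(t - t₂)}`, and integrating this exponential bound over `[t₂, ∞)`
gives the displacement `C μ J_max / |β|`.
-/

open Set

section KernelTail

theorem setIntegral_Ioi_comp_sub_right {E : Type*} [NormedAddCommGroup E] [NormedSpace ℝ E]
    (f : ℝ → E) (c x : ℝ) : ∫ y in Ioi c, f (y - x) = ∫ z in Ioi (c - x), f z := by
  rw [← integral_indicator measurableSet_Ioi, ← integral_indicator measurableSet_Ioi,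
    ← integral_sub_right_eq_self ((Ioi (c - x)).indicator f) x]
  congr 1 with y
  simp only [indicator, mem_Ioi, sub_lt_sub_iff_right]

theorem setIntegral_Iio_comp_sub_left {E : Type*} [NormedAddCommGroup E] [NormedSpace ℝ E]
    (f : ℝ → E) (c x : ℝ) : ∫ y in Iio c, f (x - y) = ∫ z in Ioi (x - c), f z := by
  rw [← integral_indicator measurableSet_Iio, ← integral_indicator measurableSet_Ioi,
    ← integral_sub_left_eq_self ((Ioi (x - c)).indicator f) volume x]
  congr 1 with y
  simp only [indicator, mem_Ioi, mem_Iio, sub_lt_sub_iff_left]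

variable {J : ℝ → ℝ}

theorem hasDerivAt_integral_Ioi (hJc : Continuous J) (hJi : Integrable J) (w : ℝ) :
    HasDerivAt (fun w => ∫ z in Ioi w, J z) (-J w) w := by
  have hsplit : (fun w => ∫ z in Ioi w, J z) = fun w => (∫ z in Ioi 0, J z) - ∫ z in 0..w, J z :=
    funext fun w => eq_sub_of_add_eq' (by
      rw [← intervalIntegral.integral_Ioi_sub_Ioi' hJi.integrableOn hJi.integrableOn]; ring)
  rw [hsplit]
  exact (hJc.integral_hasStrictDerivAt 0 w).hasDerivAt.const_sub _

theorem continuous_integral_Ioi (hJc : Continuous J) (hJi : Integrable J) :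
    Continuous fun w => ∫ z in Ioi w, J z :=
  continuous_iff_continuousAt.2 fun w => (hasDerivAt_integral_Ioi hJc hJi w).continuousAt

theorem intervalIntegral_integral_Ioi_le_moment (hJc : Continuous J) (hJi : Integrable J)
    (hJnn : ∀ x, 0 ≤ J x) (hmom : IntegrableOn (fun y => y * J y) (Ioi 0)) {a : ℝ} (ha : 0 ≤ a) :
    ∫ w in 0..a, ∫ z in Ioi w, J z ≤ ∫ y in Ioi 0, y * J y := by
  have hparts := intervalIntegral.integral_mul_deriv_eq_deriv_mul (a := 0) (b := a)
    (u := id) (u' := fun _ => 1) (fun x _ => hasDerivAt_id x)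
    (fun x _ => hasDerivAt_integral_Ioi hJc hJi x) intervalIntegrable_const
    (hJc.neg.intervalIntegrable _ _)
  simp only [id, one_mul, zero_mul, sub_zero, mul_neg, intervalIntegral.integral_neg] at hparts
  have htail : a * ∫ z in Ioi a, J z ≤ ∫ y in Ioi a, y * J y := by
    rw [← integral_const_mul]
    exact setIntegral_mono_on (hJi.integrableOn.const_mul a) (hmom.mono_set (Ioi_subset_Ioi ha))
      measurableSet_Ioi fun z hz => mul_le_mul_of_nonneg_right (le_of_lt hz) (hJnn z)
  have hsplit := intervalIntegral.integral_interval_add_Ioi hmom (hmom.mono_set (Ioi_subset_Ioi ha))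
  linarith

end KernelTail

section Outflux

theorem intervalIntegral_mul_le_const_mul {w u : ℝ → ℝ} {a b B : ℝ} (hab : a ≤ b)
    (hw : Continuous w) (hu : Continuous u) (hw0 : ∀ x ∈ Icc a b, 0 ≤ w x)
    (huB : ∀ x ∈ Icc a b, u x ≤ B) :
    ∫ x in a..b, w x * u x ≤ B * ∫ x in a..b, w x := by
  rw [← intervalIntegral.integral_const_mul]
  refine intervalIntegral.integral_mono_on hab ((hw.mul hu).intervalIntegrable _ _)
    ((continuous_const.mul hw).intervalIntegrable _ _) fun x hx => ?_
  rw [mul_comm B]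
  exact mul_le_mul_of_nonneg_left (huB x hx) (hw0 x hx)

variable {J u : ℝ → ℝ} {a b B : ℝ}

theorem integral_outflux_Ioi_le (hJc : Continuous J) (hJi : Integrable J)
    (hJeven : ∀ x, J (-x) = J x) (hJnn : ∀ x, 0 ≤ J x)
    (hmom : IntegrableOn (fun y => y * J y) (Ioi 0)) (hab : a ≤ b) (hu : Continuous u)
    (hB : 0 ≤ B) (huB : ∀ x ∈ Icc a b, u x ≤ B) :
    ∫ x in a..b, (∫ y in Ioi b, J (x - y)) * u x ≤ B * ∫ y in Ioi 0, y * J y := by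
  have hinner : ∀ x, ∫ y in Ioi b, J (x - y) = ∫ z in Ioi (b - x), J z := fun x => by
    simp_rw [← neg_sub _ x, hJeven]
    exact setIntegral_Ioi_comp_sub_right J b x
  simp_rw [hinner]
  calc _ ≤ B * ∫ x in a..b, ∫ z in Ioi (b - x), J z :=
        intervalIntegral_mul_le_const_mul hab
          ((continuous_integral_Ioi hJc hJi).comp (continuous_const.sub continuous_id)) hu
          (fun _ _ => setIntegral_nonneg measurableSet_Ioi fun z _ => hJnn z) huB
    _ = B * ∫ w in 0..b - a, ∫ z in Ioi w, J z := by
        rw [intervalIntegral.integral_comp_sub_left (fun w => ∫ z in Ioi w, J z) b, sub_self]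
    _ ≤ B * ∫ y in Ioi 0, y * J y :=
        mul_le_mul_of_nonneg_left
          (intervalIntegral_integral_Ioi_le_moment hJc hJi hJnn hmom (sub_nonneg.2 hab)) hB

theorem integral_outflux_Iio_le (hJc : Continuous J) (hJi : Integrable J)
    (hJnn : ∀ x, 0 ≤ J x) (hmom : IntegrableOn (fun y => y * J y) (Ioi 0)) (hab : a ≤ b)
    (hu : Continuous u) (hB : 0 ≤ B) (huB : ∀ x ∈ Icc a b, u x ≤ B) :
    ∫ x in a..b, (∫ y in Iio a, J (x - y)) * u x ≤ B * ∫ y in Ioi 0, y * J y := by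
  simp_rw [setIntegral_Iio_comp_sub_left J a]
  calc _ ≤ B * ∫ x in a..b, ∫ z in Ioi (x - a), J z :=
        intervalIntegral_mul_le_const_mul hab
          ((continuous_integral_Ioi hJc hJi).comp (continuous_id.sub continuous_const)) hu
          (fun _ _ => setIntegral_nonneg measurableSet_Ioi fun z _ => hJnn z) huB
    _ = B * ∫ w in 0..b - a, ∫ z in Ioi w, J z := by
        rw [intervalIntegral.integral_comp_sub_right (fun w => ∫ z in Ioi w, J z) a, sub_self]
    _ ≤ B * ∫ y in Ioi 0, y * J y :=
        mul_le_mul_of_nonneg_left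
          (intervalIntegral_integral_Ioi_le_moment hJc hJi hJnn hmom (sub_nonneg.2 hab)) hB

end Outflux

theorem le_add_div_abs_of_hasDerivAt_le_exp {f f' : ℝ → ℝ} {a A β : ℝ} (hβ : β < 0)
    (hf : ContinuousOn f (Ici a)) (hf' : ∀ t > a, HasDerivAt f (f' t) t)
    (hbound : ∀ t > a, f' t ≤ A * Real.exp (β * (t - a))) (hA : 0 ≤ A) :
    ∀ t ≥ a, f t ≤ f a + A / |β| := by
  have hexp : ∀ t, HasDerivAt (fun s => A / β * Real.exp (β * (s - a)))
      (A * Real.exp (β * (t - a))) t := fun t => by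
    refine ((((hasDerivAt_id t).sub_const a).const_mul β).exp.const_mul (A / β)).congr_deriv ?_
    simp only [id]
    field_simp [hβ.ne]
  have hanti : AntitoneOn (fun s => f s - A / β * Real.exp (β * (s - a))) (Ici a) := by
    refine antitoneOn_of_hasDerivWithinAt_nonpos (f' := fun t => f' t - A * Real.exp (β * (t - a)))
      (convex_Ici a) (hf.sub (by fun_prop))
      (fun t ht => ?_) (fun t ht => ?_)
    · rw [interior_Ici] at ht
      exact ((hf' t ht).sub (hexp t)).hasDerivWithinAt
    · rw [interior_Ici] at ht
      exact sub_nonpos.2 (hbound t ht)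
  intro t ht
  have hmono := hanti self_mem_Ici ht ht
  have hneg : A / β * Real.exp (β * (t - a)) ≤ 0 :=
    mul_nonpos_of_nonpos_of_nonneg (div_nonpos_of_nonneg_of_nonpos hA hβ.le) (Real.exp_pos _).le
  simp only [sub_self, mul_zero, Real.exp_zero, mul_one] at hmono
  rw [abs_of_neg hβ, div_neg]
  linarith

section Fronts

variable {d₁ d₂ hc k γ μ h₀ : ℝ} {J₁ J₂ u₀ v₀ : ℝ → ℝ} {u v : ℝ → ℝ → ℝ} {g h : ℝ → ℝ}
  {t₂ C β : ℝ}

theorem IsSolution.right_front_le (hsol : IsSolution d₁ d₂ hc k γ μ h₀ J₁ J₂ u₀ v₀ u v g h)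
    (hμ : 0 ≤ μ) (hJc : Continuous J₁) (hJi : Integrable J₁) (hJeven : ∀ x, J₁ (-x) = J₁ x)
    (hJnn : ∀ x, 0 ≤ J₁ x) (hmom : IntegrableOn (fun y => y * J₁ y) (Ioi 0))
    (ht₂ : 0 ≤ t₂) (hC : 0 ≤ C) (hβ : β < 0)
    (hdecay : ∀ t ≥ t₂, ∀ x ∈ Icc (g t) (h t), u t x ≤ C * Real.exp (β * (t - t₂))) :
    ∀ t ≥ t₂, h t ≤ h t₂ + C * μ * (∫ y in Ioi 0, y * J₁ y) / |β| := by
  have hM : 0 ≤ ∫ y in Ioi 0, y * J₁ y :=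
    setIntegral_nonneg measurableSet_Ioi fun y hy => mul_nonneg hy.out.le (hJnn y)
  refine le_add_div_abs_of_hasDerivAt_le_exp hβ hsol.h_cont.continuousOn
    (fun t ht => hsol.h_eq t (ht₂.trans_lt ht)) (fun t ht => ?_) (by positivity)
  calc _ ≤ μ * (C * Real.exp (β * (t - t₂)) * ∫ y in Ioi 0, y * J₁ y) :=
        mul_le_mul_of_nonneg_left (integral_outflux_Ioi_le hJc hJi hJeven hJnn hmom
          (hsol.gh_lt t (ht₂.trans ht.le)).le (hsol.u_cont.comp (Continuous.prodMk_right t))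
          (by positivity) (hdecay t ht.le)) hμ
    _ = C * μ * (∫ y in Ioi 0, y * J₁ y) * Real.exp (β * (t - t₂)) := by ring

theorem IsSolution.left_front_ge (hsol : IsSolution d₁ d₂ hc k γ μ h₀ J₁ J₂ u₀ v₀ u v g h)
    (hμ : 0 ≤ μ) (hJc : Continuous J₁) (hJi : Integrable J₁) (hJnn : ∀ x, 0 ≤ J₁ x)
    (hmom : IntegrableOn (fun y => y * J₁ y) (Ioi 0)) (ht₂ : 0 ≤ t₂) (hC : 0 ≤ C) (hβ : β < 0)
    (hdecay : ∀ t ≥ t₂, ∀ x ∈ Icc (g t) (h t), u t x ≤ C * Real.exp (β * (t - t₂))) :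
    ∀ t ≥ t₂, g t₂ - C * μ * (∫ y in Ioi 0, y * J₁ y) / |β| ≤ g t := by
  have hM : 0 ≤ ∫ y in Ioi 0, y * J₁ y :=
    setIntegral_nonneg measurableSet_Ioi fun y hy => mul_nonneg hy.out.le (hJnn y)
  intro t ht
  have hneg := le_add_div_abs_of_hasDerivAt_le_exp (f := fun s => -g s)
    (A := C * μ * ∫ y in Ioi 0, y * J₁ y) hβ hsol.g_cont.neg.continuousOn
    (fun t ht => (hsol.g_eq t (ht₂.trans_lt ht)).neg) (fun t ht => ?_) (by positivity) t ht
  · linarith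
  calc _ = μ * ∫ x in g t..h t, (∫ y in Iio (g t), J₁ (x - y)) * u t x := by ring
    _ ≤ μ * (C * Real.exp (β * (t - t₂)) * ∫ y in Ioi 0, y * J₁ y) :=
        mul_le_mul_of_nonneg_left (integral_outflux_Iio_le hJc hJi hJnn hmom
          (hsol.gh_lt t (ht₂.trans ht.le)).le (hsol.u_cont.comp (Continuous.prodMk_right t))
          (by positivity) (hdecay t ht.le)) hμ
    _ = C * μ * (∫ y in Ioi 0, y * J₁ y) * Real.exp (β * (t - t₂)) := by ring

end Fronts

theorem exponential_decay_implies_bounded_fronts_general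
    (d₁ d₂ hc k γ μ h₀ : ℝ) (J₁ J₂ u₀ v₀ : ℝ → ℝ)
    (u v : ℝ → ℝ → ℝ) (g h : ℝ → ℝ)
    (hμ : 0 < μ)
    (hJ₁ : IsKernel J₁)
    (hsol : IsSolution d₁ d₂ hc k γ μ h₀ J₁ J₂ u₀ v₀ u v g h)
    (hmom : IntegrableOn (fun y => y * J₁ y) (Set.Ioi 0))
    (t₂ C β : ℝ) (ht₂ : 0 ≤ t₂) (hC : 0 < C) (hβ : β < 0)
    (hdecay : ∀ t ≥ t₂, ∀ x ∈ Set.Icc (g t) (h t), u t x ≤ C * Real.exp (β * (t - t₂))) :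
    (∀ t ≥ t₂, h t ≤ h t₂ + C * μ * (∫ y in Set.Ioi (0:ℝ), y * J₁ y) / |β|) ∧
    (∀ t ≥ t₂, g t₂ - C * μ * (∫ y in Set.Ioi (0:ℝ), y * J₁ y) / |β| ≤ g t) ∧
    (∃ M, ∀ t ≥ 0, h t - g t ≤ M) := by
  obtain ⟨hJc, -, hJeven, hJnn, -, hJone⟩ := hJ₁
  have hJi : Integrable J₁ := .of_integral_ne_zero (by rw [hJone]; exact one_ne_zero)
  have hright := hsol.right_front_le hμ.le hJc hJi hJeven hJnn hmom ht₂ hC.le hβ hdecay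
  have hleft := hsol.left_front_ge hμ.le hJc hJi hJnn hmom ht₂ hC.le hβ hdecay
  refine ⟨hright, hleft, h t₂ - g t₂ + 2 * (C * μ * (∫ y in Ioi 0, y * J₁ y) / |β|),
    fun t ht => ?_⟩
  rcases le_total t t₂ with hle | hge
  · linarith [hsol.h_mono ht ht₂ hle, hsol.g_anti ht ht₂ hle, hright t₂ le_rfl]
  · linarith [hright t hge, hleft t hge]

/-- If `J₁` has finite first moment `J_max = ∫_0^∞ y J₁(y) dy` and
`u` decays exponentially (`u(t,x) ≤ C e^{β(t-t₂)}` with `β < 0`) on the moving domain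
for `t ≥ t₂`, then the fronts stay bounded: `h(t) ≤ h(t₂) + CμJ_max/|β|` and
`g(t) ≥ g(t₂) - CμJ_max/|β|`; in particular `h_∞ - g_∞ < ∞`. -/
theorem exponential_decay_implies_bounded_fronts
    (d₁ d₂ hc k γ μ h₀ : ℝ) (J₁ J₂ u₀ v₀ : ℝ → ℝ)
    (u v : ℝ → ℝ → ℝ) (g h : ℝ → ℝ)
    (hd₁ : 0 < d₁) (hd₂ : 0 < d₂) (hhc : 0 < hc) (hkpos : 0 < k) (hγ : 0 < γ)
    (hμ : 0 < μ)
    (hJ₁ : IsKernel J₁) (hJ₂ : IsKernel J₂)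
    (hinit : AdmissibleInit h₀ u₀ v₀)
    (hsol : IsSolution d₁ d₂ hc k γ μ h₀ J₁ J₂ u₀ v₀ u v g h)
    (hmom : IntegrableOn (fun y => y * J₁ y) (Set.Ioi 0))
    (t₂ C β : ℝ) (ht₂ : 0 ≤ t₂) (hC : 0 < C) (hβ : β < 0)
    (hdecay : ∀ t ≥ t₂, ∀ x ∈ Set.Icc (g t) (h t), u t x ≤ C * Real.exp (β * (t - t₂))) :
    (∀ t ≥ t₂, h t ≤ h t₂ + C * μ * (∫ y in Set.Ioi (0:ℝ), y * J₁ y) / |β|) ∧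
    (∀ t ≥ t₂, g t₂ - C * μ * (∫ y in Set.Ioi (0:ℝ), y * J₁ y) / |β| ≤ g t) ∧
    (∃ M, ∀ t ≥ 0, h t - g t ≤ M) :=
  exponential_decay_implies_bounded_fronts_general d₁ d₂ hc k γ μ h₀ J₁ J₂ u₀ v₀ u v g h hμ hJ₁ hsol
    hmom t₂ C β ht₂ hC hβ hdecay
end
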